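/- The number of maximal cliques of routes of G(H) with respect to the canonical bipartite framing equals the number of matchings of W(H); that is, there is a bijection between the set of such maximal cliques and the set of matchings of W(H). -/

import Mathlib

/-!
A maximal clique `C` of routes is determined by pivots. Since `(2, (i, j), _)` and
`(1, (i, j'), _)` conflict for `j < j'`, a left vertex `i` has at most one neighbour `j` at which
`C` contains routes with both first entries `1` and `2`; maximality shows that there is exactly
one, and every other route of `C` through `i` then lies on the side of it prescribed by its first
entry. Dually every right vertex has a pivot for the last entry. The only freedom left is at an
edge that is the pivot of both its ends, where `C` keeps exactly one of the crossing routes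
`(1, e, 2)` and `(2, e, 1)`.

A matching of `W(H)` records the same data: a left vertex covered by the edge `{i, j}` or by the
whisker `w_{i,j}` has pivot `j`, an uncovered one has pivot `min N(i)` (whence no whisker there),
dually with `max N(j)` on the right, and a doubly pivotal edge `e` is matched iff `C` keeps
`(1, e, 2)`.
-/

open Finset Filter Pointwise

/-- Neighbors in the right shore `T` of a left vertex `i`. -/
def Nbr (E : Finset (ℕ × ℕ)) (i : ℕ) : Finset ℕ :=
  (E.filter (fun p => p.1 = i)).image Prod.snd

/-- Neighbors in the left shore `S` of a right vertex `j`. -/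
def Nbr' (E : Finset (ℕ × ℕ)) (j : ℕ) : Finset ℕ :=
  (E.filter (fun p => p.2 = j)).image Prod.fst

/-- A route of `G(H)`: a triple `(a, (i,j), c)` with `a, c ∈ {1,2}`, `(i,j) ∈ E`,
representing the path `α_{a,i} β_{i,j} γ_{j,c}`. -/
abbrev Route : Type := ℕ × (ℕ × ℕ) × ℕ

def IsRoute (E : Finset (ℕ × ℕ)) (r : Route) : Prop :=
  (r.1 = 1 ∨ r.1 = 2) ∧ r.2.1 ∈ E ∧ (r.2.2 = 1 ∨ r.2.2 = 2)

/-- Two routes are in conflict with respect to the canonical bipartite framing. -/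
def Conflict (r r' : Route) : Prop :=
  (r.2.1 = r'.2.1 ∧
    ((r.1 = 1 ∧ r.2.2 = 2 ∧ r'.1 = 2 ∧ r'.2.2 = 1) ∨
     (r.1 = 2 ∧ r.2.2 = 1 ∧ r'.1 = 1 ∧ r'.2.2 = 2))) ∨
  (r.2.1.1 = r'.2.1.1 ∧ r.2.1.2 ≠ r'.2.1.2 ∧
    ((r.2.1.2 < r'.2.1.2 ∧ r'.1 = 1 ∧ r.1 = 2) ∨
     (r'.2.1.2 < r.2.1.2 ∧ r.1 = 1 ∧ r'.1 = 2))) ∨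
  (r.2.1.2 = r'.2.1.2 ∧ r.2.1.1 ≠ r'.2.1.1 ∧
    ((r.2.1.1 < r'.2.1.1 ∧ r.2.2 = 2 ∧ r'.2.2 = 1) ∨
     (r'.2.1.1 < r.2.1.1 ∧ r'.2.2 = 2 ∧ r.2.2 = 1)))

/-- A clique: a set of pairwise coherent routes. -/
def IsClique (E : Finset (ℕ × ℕ)) (C : Set Route) : Prop :=
  (∀ r ∈ C, IsRoute E r) ∧ ∀ r ∈ C, ∀ r' ∈ C, r ≠ r' → ¬ Conflict r r'

/-- A maximal clique of routes. -/
def IsMaxClique (E : Finset (ℕ × ℕ)) (C : Set Route) : Prop :=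
  IsClique E C ∧ ∀ C' : Set Route, IsClique E C' → C ⊆ C' → C' = C

/-- Edges of the almost-degree-whiskered graph `W(H)`:
`Sum.inl (i,j)` is the edge `{i,j}` of `H`;
`Sum.inr (Sum.inl (i,j))` is the pendant edge `{i, w_{i,j}}`;
`Sum.inr (Sum.inr (j,i))` is the pendant edge `{j, w'_{j,i}}`. -/
abbrev WEdge : Type := (ℕ × ℕ) ⊕ ((ℕ × ℕ) ⊕ (ℕ × ℕ))

def IsWEdge (E : Finset (ℕ × ℕ)) : WEdge → Prop
  | Sum.inl p => p ∈ E
  | Sum.inr (Sum.inl p) => p ∈ E ∧ ∃ j' ∈ Nbr E p.1, j' < p.2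
  | Sum.inr (Sum.inr q) => (q.2, q.1) ∈ E ∧ ∃ i' ∈ Nbr' E q.1, q.2 < i'

/-- The `H`-vertex of the left shore covered by an edge of `W(H)`, if any. -/
def leftV : WEdge → Option ℕ
  | Sum.inl p => some p.1
  | Sum.inr (Sum.inl p) => some p.1
  | Sum.inr (Sum.inr _) => none

/-- The `H`-vertex of the right shore covered by an edge of `W(H)`, if any. -/
def rightV : WEdge → Option ℕ
  | Sum.inl p => some p.2
  | Sum.inr (Sum.inl _) => none
  | Sum.inr (Sum.inr q) => some q.1

/-- A matching of `W(H)`: a set of pairwise disjoint edges of `W(H)`.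
(Leaf vertices are covered by at most one edge label automatically.) -/
def IsMatching (E : Finset (ℕ × ℕ)) (M : Set WEdge) : Prop :=
  (∀ e ∈ M, IsWEdge E e) ∧
  ∀ e ∈ M, ∀ e' ∈ M, e ≠ e' →
    (leftV e = none ∨ leftV e ≠ leftV e') ∧
    (rightV e = none ∨ rightV e ≠ rightV e')

/-- `mCount E k` is `m_k`, the number of `k`-matchings of `W(H)`. -/
noncomputable def mCount (E : Finset (ℕ × ℕ)) (k : ℕ) : ℕ :=
  {M : Set WEdge | IsMatching E M ∧ M.ncard = k}.ncard

theorem Finset.exists_separating {α : Type*} [LinearOrder α] {s : Finset α}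
    (hs : s.Nonempty) {A B : α → Prop} (hBs : ∀ y, B y → y ∈ s) (hAs : ∀ x, A x → x ∈ s)
    (hAB : ∀ x y, A x → B y → y ≤ x) :
    ∃ x₀ ∈ s, (∀ y, x₀ < y → ¬ B y) ∧ (∀ x, x < x₀ → ¬ A x) := by
  classical
  set t := s.filter (fun x => ∀ y, x < y → ¬ B y)
  have ht : t.Nonempty :=
    ⟨s.max' hs, mem_filter.2 ⟨s.max'_mem hs, fun y hy hB => (s.le_max' y (hBs y hB)).not_gt hy⟩⟩
  obtain ⟨hx₀s, hx₀⟩ := mem_filter.1 (t.min'_mem ht)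
  refine ⟨t.min' ht, hx₀s, hx₀, fun x hx hA => ?_⟩
  have hxt : x ∉ t := fun h => (t.min'_le x h).not_gt hx
  simp only [t, mem_filter, hAs x hA, true_and, not_forall, not_not] at hxt
  obtain ⟨y, hxy, hB⟩ := hxt
  exact (hAB x y hA hB).not_gt hxy

lemma mem_nbr {E : Finset (ℕ × ℕ)} {i j : ℕ} : j ∈ Nbr E i ↔ (i, j) ∈ E := by
  simp [Nbr]

lemma mem_nbr' {E : Finset (ℕ × ℕ)} {i j : ℕ} : i ∈ Nbr' E j ↔ (i, j) ∈ E := by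
  simp [Nbr']

lemma conflict_left {i j j' : ℕ} (c c' : ℕ) (h : j < j') :
    Conflict (2, (i, j), c) (1, (i, j'), c') :=
  Or.inr (Or.inl ⟨rfl, h.ne, Or.inl ⟨h, rfl, rfl⟩⟩)

lemma conflict_right {i i' j : ℕ} (a a' : ℕ) (h : i < i') :
    Conflict (a, (i, j), 2) (a', (i', j), 1) :=
  Or.inr (Or.inr ⟨rfl, h.ne, Or.inl ⟨h, rfl, rfl⟩⟩)

lemma conflict_twist (e : ℕ × ℕ) : Conflict (1, e, 2) (2, e, 1) :=
  Or.inl ⟨rfl, Or.inl ⟨rfl, rfl, rfl, rfl⟩⟩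

section Routes

variable {E : Finset (ℕ × ℕ)} {C : Set Route}

lemma isClique_iff : IsClique E C ↔ (∀ r ∈ C, IsRoute E r) ∧
    (∀ e, (1, e, 2) ∈ C → (2, e, 1) ∉ C) ∧
    (∀ i j j' c c', j < j' → (2, (i, j), c) ∈ C → (1, (i, j'), c') ∉ C) ∧
    (∀ i i' j a a', i < i' → (a, (i, j), 2) ∈ C → (a', (i', j), 1) ∉ C) := by
  refine ⟨fun hC => ⟨hC.1, ?_, ?_, ?_⟩, fun ⟨hR, hT, hL, hRt⟩ => ⟨hR, ?_⟩⟩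
  · exact fun e h h' => hC.2 _ h _ h' (by simp) (conflict_twist e)
  · exact fun i j j' c c' hj h h' => hC.2 _ h _ h' (by simp [hj.ne]) (conflict_left c c' hj)
  · exact fun i i' j a a' hi h h' => hC.2 _ h _ h' (by simp [hi.ne]) (conflict_right a a' hi)
  rintro ⟨a, ⟨i, j⟩, c⟩ hr ⟨a', ⟨i', j'⟩, c'⟩ hr' - hconf
  simp only [Conflict, Prod.mk.injEq] at hconf
  rcases hconf with ⟨⟨rfl, rfl⟩, ⟨rfl, rfl, rfl, rfl⟩ | ⟨rfl, rfl, rfl, rfl⟩⟩ |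
    ⟨rfl, -, ⟨hlt, rfl, rfl⟩ | ⟨hlt, rfl, rfl⟩⟩ | ⟨rfl, -, ⟨hlt, rfl, rfl⟩ | ⟨hlt, rfl, rfl⟩⟩
  · exact hT _ hr hr'
  · exact hT _ hr' hr
  · exact hL _ _ _ _ _ hlt hr hr'
  · exact hL _ _ _ _ _ hlt hr' hr
  · exact hRt _ _ _ _ _ hlt hr hr'
  · exact hRt _ _ _ _ _ hlt hr' hr

lemma IsClique.left_le (hC : IsClique E C) {i j j' c c' : ℕ} (h : (2, (i, j), c) ∈ C)
    (h' : (1, (i, j'), c') ∈ C) : j' ≤ j :=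
  not_lt.1 fun hj => (isClique_iff.1 hC).2.2.1 _ _ _ _ _ hj h h'

lemma IsClique.right_le (hC : IsClique E C) {i i' j a a' : ℕ} (h : (a, (i, j), 2) ∈ C)
    (h' : (a', (i', j), 1) ∈ C) : i' ≤ i :=
  not_lt.1 fun hi => (isClique_iff.1 hC).2.2.2 _ _ _ _ _ hi h h'

lemma IsClique.twist_not_mem (hC : IsClique E C) {e : ℕ × ℕ} (h : (1, e, 2) ∈ C) :
    (2, e, 1) ∉ C :=
  (isClique_iff.1 hC).2.1 e h

lemma isMaxClique_iff : IsMaxClique E C ↔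
    IsClique E C ∧ ∀ r, IsRoute E r → r ∉ C → ∃ r' ∈ C, Conflict r r' ∨ Conflict r' r := by
  refine ⟨fun hC => ⟨hC.1, fun r hr hrC => ?_⟩, fun ⟨hC, h⟩ => ⟨hC, fun C' hC' hsub => ?_⟩⟩
  · by_contra! h
    have hclique : IsClique E (insert r C) := by
      refine ⟨Set.forall_mem_insert.2 ⟨hr, hC.1.1⟩, ?_⟩
      rintro x (rfl | hx) y (rfl | hy) hxy
      · exact absurd rfl hxy
      · exact (h y hy).1
      · exact (h x hx).2
      · exact hC.1.2 x hx y hy hxy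
    exact hrC (hC.2 _ hclique (Set.subset_insert r C) ▸ Set.mem_insert r C)
  · refine (hsub.antisymm fun r hr => ?_).symm
    by_contra hrC
    obtain ⟨r', hr', hconf⟩ := h r (hC'.1 r hr) hrC
    have hne : r ≠ r' := fun h => hrC (h ▸ hr')
    exact hconf.elim (hC'.2 r hr r' (hsub hr') hne) (hC'.2 r' (hsub hr') r hr hne.symm)

lemma IsMaxClique.blocked_of_not_mem (hC : IsMaxClique E C) {a i j c : ℕ}
    (hr : IsRoute E (a, (i, j), c)) (hrC : (a, (i, j), c) ∉ C) :
    (a = 1 ∧ c = 2 ∧ (2, (i, j), 1) ∈ C) ∨ (a = 2 ∧ c = 1 ∧ (1, (i, j), 2) ∈ C) ∨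
    (a = 1 ∧ ∃ j' < j, ∃ c', (2, (i, j'), c') ∈ C) ∨
    (a = 2 ∧ ∃ j' > j, ∃ c', (1, (i, j'), c') ∈ C) ∨
    (c = 1 ∧ ∃ i' < i, ∃ a', (a', (i', j), 2) ∈ C) ∨
    (c = 2 ∧ ∃ i' > i, ∃ a', (a', (i', j), 1) ∈ C) := by
  obtain ⟨⟨a', ⟨i', j'⟩, c'⟩, hr', hconf⟩ := (isMaxClique_iff.1 hC).2 _ hr hrC
  simp only [Conflict, Prod.mk.injEq] at hconf
  rcases hconf with (⟨⟨rfl, rfl⟩, ⟨rfl, rfl, rfl, rfl⟩ | ⟨rfl, rfl, rfl, rfl⟩⟩ |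
    ⟨rfl, -, ⟨hlt, rfl, rfl⟩ | ⟨hlt, rfl, rfl⟩⟩ | ⟨rfl, -, ⟨hlt, rfl, rfl⟩ | ⟨hlt, rfl, rfl⟩⟩) |
    (⟨⟨rfl, rfl⟩, ⟨rfl, rfl, rfl, rfl⟩ | ⟨rfl, rfl, rfl, rfl⟩⟩ |
    ⟨rfl, -, ⟨hlt, rfl, rfl⟩ | ⟨hlt, rfl, rfl⟩⟩ | ⟨rfl, -, ⟨hlt, rfl, rfl⟩ | ⟨hlt, rfl, rfl⟩⟩)
  · exact Or.inl ⟨rfl, rfl, hr'⟩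
  · exact Or.inr (Or.inl ⟨rfl, rfl, hr'⟩)
  · exact Or.inr (Or.inr (Or.inr (Or.inl ⟨rfl, _, hlt, _, hr'⟩)))
  · exact Or.inr (Or.inr (Or.inl ⟨rfl, _, hlt, _, hr'⟩))
  · exact Or.inr (Or.inr (Or.inr (Or.inr (Or.inr ⟨rfl, _, hlt, _, hr'⟩))))
  · exact Or.inr (Or.inr (Or.inr (Or.inr (Or.inl ⟨rfl, _, hlt, _, hr'⟩))))
  · exact Or.inr (Or.inl ⟨rfl, rfl, hr'⟩)
  · exact Or.inl ⟨rfl, rfl, hr'⟩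
  · exact Or.inr (Or.inr (Or.inl ⟨rfl, _, hlt, _, hr'⟩))
  · exact Or.inr (Or.inr (Or.inr (Or.inl ⟨rfl, _, hlt, _, hr'⟩)))
  · exact Or.inr (Or.inr (Or.inr (Or.inr (Or.inl ⟨rfl, _, hlt, _, hr'⟩))))
  · exact Or.inr (Or.inr (Or.inr (Or.inr (Or.inr ⟨rfl, _, hlt, _, hr'⟩))))

def IsLeftPivot (C : Set Route) (i j : ℕ) : Prop :=
  (∃ c, (1, (i, j), c) ∈ C) ∧ ∃ c, (2, (i, j), c) ∈ C

def IsRightPivot (C : Set Route) (i j : ℕ) : Prop :=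
  (∃ a, (a, (i, j), 1) ∈ C) ∧ ∃ a, (a, (i, j), 2) ∈ C

lemma IsClique.isLeftPivot_unique (hC : IsClique E C) {i j j' : ℕ} (h : IsLeftPivot C i j)
    (h' : IsLeftPivot C i j') : j = j' :=
  le_antisymm (hC.left_le h'.2.choose_spec h.1.choose_spec)
    (hC.left_le h.2.choose_spec h'.1.choose_spec)

lemma IsClique.isRightPivot_unique (hC : IsClique E C) {i i' j : ℕ} (h : IsRightPivot C i j)
    (h' : IsRightPivot C i' j) : i = i' :=
  le_antisymm (hC.right_le h'.2.choose_spec h.1.choose_spec)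
    (hC.right_le h.2.choose_spec h'.1.choose_spec)

lemma IsMaxClique.exists_left_one (hC : IsMaxClique E C) {i j : ℕ} (hij : (i, j) ∈ E)
    (hfree : ∀ j' < j, ∀ c, (2, (i, j'), c) ∉ C) : ∃ c, (1, (i, j), c) ∈ C := by
  -- `(1, e, 1)` can then only be blocked through `j`, by a route `(_, (i', j), 2)` with `i' < i`,
  -- and that route conflicts with whatever blocks `(1, e, 2)`.
  by_contra! h
  obtain ⟨i', hi', a', hA⟩ : ∃ i' < i, ∃ a', (a', (i', j), 2) ∈ C := by
    rcases hC.blocked_of_not_mem ⟨Or.inl rfl, hij, Or.inl rfl⟩ (h 1) with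
      ⟨-, ⟨⟩, -⟩ | ⟨⟨⟩, -⟩ | ⟨-, j', hj', c', h'⟩ | ⟨⟨⟩, -⟩ | ⟨-, hA⟩ | ⟨⟨⟩, -⟩
    · exact absurd h' (hfree j' hj' c')
    · exact hA
  rcases hC.blocked_of_not_mem ⟨Or.inl rfl, hij, Or.inr rfl⟩ (h 2) with
    ⟨-, -, h'⟩ | ⟨⟨⟩, -⟩ | ⟨-, j', hj', c', h'⟩ | ⟨⟨⟩, -⟩ | ⟨⟨⟩, -⟩ | ⟨-, i'', hi'', a'', h'⟩
  · exact (hC.1.right_le hA h').not_gt hi'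
  · exact hfree j' hj' c' h'
  · exact (hC.1.right_le hA h').not_gt (hi'.trans hi'')

lemma IsMaxClique.exists_left_two (hC : IsMaxClique E C) {i j : ℕ} (hij : (i, j) ∈ E)
    (hfree : ∀ j' > j, ∀ c, (1, (i, j'), c) ∉ C) : ∃ c, (2, (i, j), c) ∈ C := by
  by_contra! h
  obtain ⟨i', hi', a', hA⟩ : ∃ i' > i, ∃ a', (a', (i', j), 1) ∈ C := by
    rcases hC.blocked_of_not_mem ⟨Or.inr rfl, hij, Or.inr rfl⟩ (h 2) with
      ⟨⟨⟩, -⟩ | ⟨-, ⟨⟩, -⟩ | ⟨⟨⟩, -⟩ | ⟨-, j', hj', c', h'⟩ | ⟨⟨⟩, -⟩ | ⟨-, hA⟩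
    · exact absurd h' (hfree j' hj' c')
    · exact hA
  rcases hC.blocked_of_not_mem ⟨Or.inr rfl, hij, Or.inl rfl⟩ (h 1) with
    ⟨⟨⟩, -⟩ | ⟨-, -, h'⟩ | ⟨⟨⟩, -⟩ | ⟨-, j', hj', c', h'⟩ | ⟨-, i'', hi'', a'', h'⟩ | ⟨⟨⟩, -⟩
  · exact (hC.1.right_le h' hA).not_gt hi'
  · exact hfree j' hj' c' h'
  · exact (hC.1.right_le h' hA).not_gt (hi''.trans hi')

lemma IsMaxClique.exists_right_one (hC : IsMaxClique E C) {i j : ℕ} (hij : (i, j) ∈ E)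
    (hfree : ∀ i' < i, ∀ a, (a, (i', j), 2) ∉ C) : ∃ a, (a, (i, j), 1) ∈ C := by
  by_contra! h
  obtain ⟨j', hj', c', hA⟩ : ∃ j' < j, ∃ c', (2, (i, j'), c') ∈ C := by
    rcases hC.blocked_of_not_mem ⟨Or.inl rfl, hij, Or.inl rfl⟩ (h 1) with
      ⟨-, ⟨⟩, -⟩ | ⟨⟨⟩, -⟩ | ⟨-, hA⟩ | ⟨⟨⟩, -⟩ | ⟨-, i', hi', a', h'⟩ | ⟨⟨⟩, -⟩
    · exact hA
    · exact absurd h' (hfree i' hi' a')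
  rcases hC.blocked_of_not_mem ⟨Or.inr rfl, hij, Or.inl rfl⟩ (h 2) with
    ⟨⟨⟩, -⟩ | ⟨-, -, h'⟩ | ⟨⟨⟩, -⟩ | ⟨-, j'', hj'', c'', h'⟩ | ⟨-, i', hi', a', h'⟩ | ⟨⟨⟩, -⟩
  · exact (hC.1.left_le hA h').not_gt hj'
  · exact (hC.1.left_le hA h').not_gt (hj'.trans hj'')
  · exact hfree i' hi' a' h'

lemma IsMaxClique.exists_right_two (hC : IsMaxClique E C) {i j : ℕ} (hij : (i, j) ∈ E)
    (hfree : ∀ i' > i, ∀ a, (a, (i', j), 1) ∉ C) : ∃ a, (a, (i, j), 2) ∈ C := by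
  by_contra! h
  obtain ⟨j', hj', c', hA⟩ : ∃ j' > j, ∃ c', (1, (i, j'), c') ∈ C := by
    rcases hC.blocked_of_not_mem ⟨Or.inr rfl, hij, Or.inr rfl⟩ (h 2) with
      ⟨⟨⟩, -⟩ | ⟨-, ⟨⟩, -⟩ | ⟨⟨⟩, -⟩ | ⟨-, hA⟩ | ⟨⟨⟩, -⟩ | ⟨-, i', hi', a', h'⟩
    · exact hA
    · exact absurd h' (hfree i' hi' a')
  rcases hC.blocked_of_not_mem ⟨Or.inl rfl, hij, Or.inr rfl⟩ (h 1) with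
    ⟨-, -, h'⟩ | ⟨⟨⟩, -⟩ | ⟨-, j'', hj'', c'', h'⟩ | ⟨⟨⟩, -⟩ | ⟨⟨⟩, -⟩ | ⟨-, i', hi', a', h'⟩
  · exact (hC.1.left_le h' hA).not_gt hj'
  · exact (hC.1.left_le h' hA).not_gt (hj''.trans hj')
  · exact hfree i' hi' a' h'

lemma IsMaxClique.exists_isLeftPivot (hC : IsMaxClique E C) {i j : ℕ} (hij : (i, j) ∈ E) :
    ∃ j₀, (i, j₀) ∈ E ∧ IsLeftPivot C i j₀ := by
  obtain ⟨j₀, hj₀, hgt, hlt⟩ := (Nbr E i).exists_separating ⟨j, mem_nbr.2 hij⟩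
    (A := fun j' => ∃ c, (2, (i, j'), c) ∈ C) (B := fun j' => ∃ c, (1, (i, j'), c) ∈ C)
    (fun _ ⟨_, h⟩ => mem_nbr.2 (hC.1.1 _ h).2.1) (fun _ ⟨_, h⟩ => mem_nbr.2 (hC.1.1 _ h).2.1)
    fun _ _ ⟨_, h⟩ ⟨_, h'⟩ => hC.1.left_le h h'
  have hj₀E := mem_nbr.1 hj₀
  exact ⟨j₀, hj₀E, hC.exists_left_one hj₀E fun j' hj' c h => hlt j' hj' ⟨c, h⟩,
    hC.exists_left_two hj₀E fun j' hj' c h => hgt j' hj' ⟨c, h⟩⟩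

lemma IsMaxClique.exists_isRightPivot (hC : IsMaxClique E C) {i j : ℕ} (hij : (i, j) ∈ E) :
    ∃ i₀, (i₀, j) ∈ E ∧ IsRightPivot C i₀ j := by
  obtain ⟨i₀, hi₀, hgt, hlt⟩ := (Nbr' E j).exists_separating ⟨i, mem_nbr'.2 hij⟩
    (A := fun i' => ∃ a, (a, (i', j), 2) ∈ C) (B := fun i' => ∃ a, (a, (i', j), 1) ∈ C)
    (fun _ ⟨_, h⟩ => mem_nbr'.2 (hC.1.1 _ h).2.1) (fun _ ⟨_, h⟩ => mem_nbr'.2 (hC.1.1 _ h).2.1)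
    fun _ _ ⟨_, h⟩ ⟨_, h'⟩ => hC.1.right_le h h'
  have hi₀E := mem_nbr'.1 hi₀
  exact ⟨i₀, hi₀E, hC.exists_right_one hi₀E fun i' hi' a h => hlt i' hi' ⟨a, h⟩,
    hC.exists_right_two hi₀E fun i' hi' a h => hgt i' hi' ⟨a, h⟩⟩

lemma isMatching_iff {M : Set WEdge} : IsMatching E M ↔ (∀ w ∈ M, IsWEdge E w) ∧
    (∀ w ∈ M, ∀ w' ∈ M, ∀ i, leftV w = some i → leftV w' = some i → w = w') ∧
    (∀ w ∈ M, ∀ w' ∈ M, ∀ j, rightV w = some j → rightV w' = some j → w = w') := by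
  refine ⟨fun hM => ⟨hM.1, ?_, ?_⟩, fun ⟨hW, hL, hR⟩ => ⟨hW, fun w hw w' hw' hne => ⟨?_, ?_⟩⟩⟩
  · intro w hw w' hw' i h h'
    by_contra hne
    rcases (hM.2 w hw w' hw' hne).1 with h₀ | h₀ <;> simp_all
  · intro w hw w' hw' j h h'
    by_contra hne
    rcases (hM.2 w hw w' hw' hne).2 with h₀ | h₀ <;> simp_all
  · cases h : leftV w with
    | none => exact Or.inl rfl
    | some i => exact Or.inr fun h' => hne (hL w hw w' hw' i h h'.symm)
  · cases h : rightV w with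
    | none => exact Or.inl rfl
    | some j => exact Or.inr fun h' => hne (hR w hw w' hw' j h h'.symm)

def CoversLeft (M : Set WEdge) (i j : ℕ) : Prop :=
  Sum.inl (i, j) ∈ M ∨ Sum.inr (Sum.inl (i, j)) ∈ M

def CoversRight (M : Set WEdge) (i j : ℕ) : Prop :=
  Sum.inl (i, j) ∈ M ∨ Sum.inr (Sum.inr (j, i)) ∈ M

open Classical in
noncomputable def leftPivot (E : Finset (ℕ × ℕ)) (M : Set WEdge) (i : ℕ) : ℕ :=
  if h : ∃ j, CoversLeft M i j then h.choose
  else if hN : (Nbr E i).Nonempty then (Nbr E i).min' hN else 0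

open Classical in
noncomputable def rightPivot (E : Finset (ℕ × ℕ)) (M : Set WEdge) (j : ℕ) : ℕ :=
  if h : ∃ i, CoversRight M i j then h.choose
  else if hN : (Nbr' E j).Nonempty then (Nbr' E j).max' hN else 0

section Matching

variable {M : Set WEdge} {i j : ℕ}

lemma IsMatching.coversLeft_unique (hM : IsMatching E M) {j' : ℕ} (h : CoversLeft M i j)
    (h' : CoversLeft M i j') : j = j' := by
  have hL := (isMatching_iff.1 hM).2.1
  rcases h with h | h <;> rcases h' with h' | h' <;> simpa using hL _ h _ h' i rfl rfl

lemma IsMatching.coversRight_unique (hM : IsMatching E M) {i' : ℕ} (h : CoversRight M i j)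
    (h' : CoversRight M i' j) : i = i' := by
  have hR := (isMatching_iff.1 hM).2.2
  rcases h with h | h <;> rcases h' with h' | h' <;> simpa using hR _ h _ h' j rfl rfl

lemma IsMatching.leftPivot_eq (hM : IsMatching E M) (h : CoversLeft M i j) :
    leftPivot E M i = j := by
  have hex : ∃ j, CoversLeft M i j := ⟨j, h⟩
  rw [leftPivot, dif_pos hex]
  exact hM.coversLeft_unique hex.choose_spec h

lemma IsMatching.rightPivot_eq (hM : IsMatching E M) (h : CoversRight M i j) :
    rightPivot E M j = i := by
  have hex : ∃ i, CoversRight M i j := ⟨i, h⟩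
  rw [rightPivot, dif_pos hex]
  exact hM.coversRight_unique hex.choose_spec h

lemma leftPivot_le (h : ∀ j, ¬ CoversLeft M i j) (hij : (i, j) ∈ E) : leftPivot E M i ≤ j := by
  rw [leftPivot, dif_neg (not_exists.2 h), dif_pos ⟨j, mem_nbr.2 hij⟩]
  exact (Nbr E i).min'_le j (mem_nbr.2 hij)

lemma le_rightPivot (h : ∀ i, ¬ CoversRight M i j) (hij : (i, j) ∈ E) :
    i ≤ rightPivot E M j := by
  rw [rightPivot, dif_neg (not_exists.2 h), dif_pos ⟨i, mem_nbr'.2 hij⟩]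
  exact (Nbr' E j).le_max' i (mem_nbr'.2 hij)

lemma IsMatching.leftPivot_mem (hM : IsMatching E M) (hij : (i, j) ∈ E) :
    (i, leftPivot E M i) ∈ E := by
  by_cases h : ∃ j, CoversLeft M i j
  · obtain ⟨j', h | h⟩ := h
    · exact hM.leftPivot_eq (Or.inl h) ▸ hM.1 _ h
    · exact hM.leftPivot_eq (Or.inr h) ▸ (hM.1 _ h).1
  · rw [leftPivot, dif_neg h, dif_pos ⟨j, mem_nbr.2 hij⟩]
    exact mem_nbr.1 ((Nbr E i).min'_mem _)

lemma IsMatching.rightPivot_mem (hM : IsMatching E M) (hij : (i, j) ∈ E) :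
    (rightPivot E M j, j) ∈ E := by
  by_cases h : ∃ i, CoversRight M i j
  · obtain ⟨i', h | h⟩ := h
    · exact hM.rightPivot_eq (Or.inl h) ▸ hM.1 _ h
    · exact hM.rightPivot_eq (Or.inr h) ▸ (hM.1 _ h).1
  · rw [rightPivot, dif_neg h, dif_pos ⟨i, mem_nbr'.2 hij⟩]
    exact mem_nbr'.1 ((Nbr' E j).max'_mem _)

lemma IsMatching.mem_leftWhisker_iff (hM : IsMatching E M) :
    Sum.inr (Sum.inl (i, j)) ∈ M ↔
      IsWEdge E (Sum.inr (Sum.inl (i, j))) ∧ leftPivot E M i = j ∧ Sum.inl (i, j) ∉ M := by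
  refine ⟨fun h => ⟨hM.1 _ h, hM.leftPivot_eq (Or.inr h), fun h' => ?_⟩, ?_⟩
  · simpa using (isMatching_iff.1 hM).2.1 _ h _ h' i rfl rfl
  rintro ⟨⟨-, j', hj', hlt⟩, hf, hnot⟩
  by_cases hcov : ∃ j, CoversLeft M i j
  · obtain ⟨j'', hcov⟩ := hcov
    obtain rfl := hf.symm.trans (hM.leftPivot_eq hcov)
    exact hcov.resolve_left hnot
  · exact absurd (hf ▸ leftPivot_le (not_exists.1 hcov) (mem_nbr.1 hj')) hlt.not_ge

lemma IsMatching.mem_rightWhisker_iff (hM : IsMatching E M) :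
    Sum.inr (Sum.inr (j, i)) ∈ M ↔
      IsWEdge E (Sum.inr (Sum.inr (j, i))) ∧ rightPivot E M j = i ∧ Sum.inl (i, j) ∉ M := by
  refine ⟨fun h => ⟨hM.1 _ h, hM.rightPivot_eq (Or.inr h), fun h' => ?_⟩, ?_⟩
  · simpa using (isMatching_iff.1 hM).2.2 _ h _ h' j rfl rfl
  rintro ⟨⟨-, i', hi', hlt⟩, hg, hnot⟩
  by_cases hcov : ∃ i, CoversRight M i j
  · obtain ⟨i'', hcov⟩ := hcov
    obtain rfl := hg.symm.trans (hM.rightPivot_eq hcov)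
    exact hcov.resolve_left hnot
  · exact absurd (hg ▸ le_rightPivot (not_exists.1 hcov) (mem_nbr'.1 hi')) hlt.not_ge

end Matching

def LeftFits (f : ℕ → ℕ) (a i j : ℕ) : Prop := (a = 1 ∧ j ≤ f i) ∨ (a = 2 ∧ f i ≤ j)

def RightFits (g : ℕ → ℕ) (c i j : ℕ) : Prop := (c = 1 ∧ i ≤ g j) ∨ (c = 2 ∧ g j ≤ i)

lemma leftFits_one {f : ℕ → ℕ} {i j : ℕ} : LeftFits f 1 i j ↔ j ≤ f i := by
  simp [LeftFits]

lemma leftFits_two {f : ℕ → ℕ} {i j : ℕ} : LeftFits f 2 i j ↔ f i ≤ j := by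
  simp [LeftFits]

lemma rightFits_one {g : ℕ → ℕ} {i j : ℕ} : RightFits g 1 i j ↔ i ≤ g j := by
  simp [RightFits]

lemma rightFits_two {g : ℕ → ℕ} {i j : ℕ} : RightFits g 2 i j ↔ g j ≤ i := by
  simp [RightFits]

def IsMatchedEdge (C : Set Route) (i j : ℕ) : Prop :=
  IsLeftPivot C i j ∧ IsRightPivot C i j ∧ (1, (i, j), 2) ∈ C

/-- At an edge `(i, j)` that is the pivot of both its ends, `M` decides which of the two crossing
routes `(1, (i,j), 2)` and `(2, (i,j), 1)` is kept: the first one iff `(i, j) ∈ M`. -/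
def cliqueOfMatching (E : Finset (ℕ × ℕ)) (M : Set WEdge) : Set Route :=
  {r | r.2.1 ∈ E ∧ LeftFits (leftPivot E M) r.1 r.2.1.1 r.2.1.2 ∧
    RightFits (rightPivot E M) r.2.2 r.2.1.1 r.2.1.2 ∧
    (r.1 = 2 → r.2.2 = 1 → Sum.inl r.2.1 ∉ M) ∧
    (r.1 = 1 → r.2.2 = 2 → leftPivot E M r.2.1.1 = r.2.1.2 → rightPivot E M r.2.1.2 = r.2.1.1 →
      Sum.inl r.2.1 ∈ M)}

section CliqueOfMatching

variable {M : Set WEdge} {i j : ℕ}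

lemma isClique_cliqueOfMatching (M : Set WEdge) : IsClique E (cliqueOfMatching E M) := by
  refine isClique_iff.2 ⟨?_, ?_, ?_, ?_⟩
  · rintro ⟨a, e, c⟩ ⟨he, ha, hc, -⟩
    exact ⟨ha.imp And.left And.left, he, hc.imp And.left And.left⟩
  · rintro ⟨i, j⟩ ⟨-, hf, hg, -, hM⟩ ⟨-, hf', hg', hM', -⟩
    simp only [leftFits_one, leftFits_two, rightFits_one, rightFits_two] at hf hg hf' hg'
    exact hM' rfl rfl (hM rfl rfl (le_antisymm hf' hf) (le_antisymm hg hg'))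
  · rintro i j j' c c' hlt ⟨-, hf, -⟩ ⟨-, hf', -⟩
    simp only [leftFits_one, leftFits_two] at hf hf'
    omega
  · rintro i i' j a a' hlt ⟨-, -, hg, -⟩ ⟨-, -, hg', -⟩
    simp only [rightFits_one, rightFits_two] at hg hg'
    omega

lemma IsMatching.isLeftPivot_cliqueOfMatching (hM : IsMatching E M) (hij : (i, j) ∈ E) :
    IsLeftPivot (cliqueOfMatching E M) i (leftPivot E M i) := by
  have hE := hM.leftPivot_mem hij
  generalize hj₀ : leftPivot E M i = j₀ at hE ⊢
  have hin : Sum.inl (i, j₀) ∈ M → rightPivot E M j₀ = i := fun h => hM.rightPivot_eq (Or.inl h)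
  constructor
  · by_cases hg : i ≤ rightPivot E M j₀
    · exact ⟨1, hE, leftFits_one.2 hj₀.ge, rightFits_one.2 hg, by simp, by simp⟩
    · refine ⟨2, hE, leftFits_one.2 hj₀.ge, rightFits_two.2 (not_le.1 hg).le, by simp, ?_⟩
      exact fun _ _ _ (h : rightPivot E M j₀ = i) => absurd h (by omega)
  · by_cases hg : rightPivot E M j₀ ≤ i
    · exact ⟨2, hE, leftFits_two.2 hj₀.le, rightFits_two.2 hg, by simp, by simp⟩
    · refine ⟨1, hE, leftFits_two.2 hj₀.le, rightFits_one.2 (not_le.1 hg).le, ?_, by simp⟩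
      exact fun _ _ h => absurd (hin h) (by omega)

lemma IsMatching.isRightPivot_cliqueOfMatching (hM : IsMatching E M) (hij : (i, j) ∈ E) :
    IsRightPivot (cliqueOfMatching E M) (rightPivot E M j) j := by
  have hE := hM.rightPivot_mem hij
  generalize hi₀ : rightPivot E M j = i₀ at hE ⊢
  have hin : Sum.inl (i₀, j) ∈ M → leftPivot E M i₀ = j := fun h => hM.leftPivot_eq (Or.inl h)
  constructor
  · by_cases hf : j ≤ leftPivot E M i₀
    · exact ⟨1, hE, leftFits_one.2 hf, rightFits_one.2 hi₀.ge, by simp, by simp⟩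
    · refine ⟨2, hE, leftFits_two.2 (not_le.1 hf).le, rightFits_one.2 hi₀.ge, ?_, by simp⟩
      exact fun _ _ h => absurd (hin h) (by omega)
  · by_cases hf : leftPivot E M i₀ ≤ j
    · exact ⟨2, hE, leftFits_two.2 hf, rightFits_two.2 hi₀.le, by simp, by simp⟩
    · refine ⟨1, hE, leftFits_one.2 (not_le.1 hf).le, rightFits_two.2 hi₀.le, by simp, ?_⟩
      exact fun _ _ (h : leftPivot E M i₀ = j) _ => absurd h (by omega)

lemma IsMatching.isLeftPivot_cliqueOfMatching_iff (hM : IsMatching E M) (hij : (i, j) ∈ E) :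
    IsLeftPivot (cliqueOfMatching E M) i j ↔ leftPivot E M i = j :=
  ⟨fun ⟨⟨_, h₁⟩, ⟨_, h₂⟩⟩ => le_antisymm (leftFits_two.1 h₂.2.1) (leftFits_one.1 h₁.2.1),
    fun h => h ▸ hM.isLeftPivot_cliqueOfMatching hij⟩

lemma IsMatching.isRightPivot_cliqueOfMatching_iff (hM : IsMatching E M) (hij : (i, j) ∈ E) :
    IsRightPivot (cliqueOfMatching E M) i j ↔ rightPivot E M j = i :=
  ⟨fun ⟨⟨_, h₁⟩, ⟨_, h₂⟩⟩ => le_antisymm (rightFits_two.1 h₂.2.2.1) (rightFits_one.1 h₁.2.2.1),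
    fun h => h ▸ hM.isRightPivot_cliqueOfMatching hij⟩

lemma IsMatching.isMatchedEdge_cliqueOfMatching_iff (hM : IsMatching E M) :
    IsMatchedEdge (cliqueOfMatching E M) i j ↔ Sum.inl (i, j) ∈ M := by
  constructor
  · rintro ⟨hL, hR, h⟩
    exact h.2.2.2.2 rfl rfl ((hM.isLeftPivot_cliqueOfMatching_iff h.1).1 hL)
      ((hM.isRightPivot_cliqueOfMatching_iff h.1).1 hR)
  · intro h
    have hij : (i, j) ∈ E := hM.1 _ h
    have hf := hM.leftPivot_eq (Or.inl h)
    have hg := hM.rightPivot_eq (Or.inl h)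
    exact ⟨(hM.isLeftPivot_cliqueOfMatching_iff hij).2 hf,
      (hM.isRightPivot_cliqueOfMatching_iff hij).2 hg,
      hij, leftFits_one.2 hf.ge, rightFits_two.2 hg.le, by simp, fun _ _ _ _ => h⟩

lemma IsMatching.exists_conflict_cliqueOfMatching (hM : IsMatching E M) {r : Route}
    (hr : IsRoute E r) (hrC : r ∉ cliqueOfMatching E M) :
    ∃ r' ∈ cliqueOfMatching E M, Conflict r r' ∨ Conflict r' r := by
  obtain ⟨a, ⟨i, j⟩, c⟩ := r
  obtain ⟨ha, hij, hc⟩ := hr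
  have hL := hM.isLeftPivot_cliqueOfMatching hij
  have hR := hM.isRightPivot_cliqueOfMatching hij
  by_cases hA : LeftFits (leftPivot E M) a i j
  swap
  · rcases ha with rfl | rfl
    · obtain ⟨c', h'⟩ := hL.2
      exact ⟨_, h', Or.inr (conflict_left c' c (not_le.1 (mt leftFits_one.2 hA)))⟩
    · obtain ⟨c', h'⟩ := hL.1
      exact ⟨_, h', Or.inl (conflict_left c c' (not_le.1 (mt leftFits_two.2 hA)))⟩
  by_cases hC : RightFits (rightPivot E M) c i j
  swap
  · rcases hc with rfl | rfl
    · obtain ⟨a', h'⟩ := hR.2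
      exact ⟨_, h', Or.inr (conflict_right a' a (not_le.1 (mt rightFits_one.2 hC)))⟩
    · obtain ⟨a', h'⟩ := hR.1
      exact ⟨_, h', Or.inl (conflict_right a a' (not_le.1 (mt rightFits_two.2 hC)))⟩
  rcases not_and_or.1 fun h => hrC ⟨hij, hA, hC, h⟩ with h | h <;> push Not at h
  · obtain ⟨rfl, rfl, h⟩ := h
    refine ⟨(1, (i, j), 2), ⟨hij, ?_, ?_, by simp, fun _ _ _ _ => h⟩, Or.inr (conflict_twist _)⟩
    · exact leftFits_one.2 (hM.leftPivot_eq (Or.inl h)).ge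
    · exact rightFits_two.2 (hM.rightPivot_eq (Or.inl h)).le
  · obtain ⟨rfl, rfl, hf, hg, h⟩ := h
    exact ⟨(2, (i, j), 1),
      ⟨hij, leftFits_two.2 hf.le, rightFits_one.2 hg.ge, fun _ _ => h, by simp⟩,
      Or.inl (conflict_twist _)⟩

lemma IsMatching.isMaxClique_cliqueOfMatching (hM : IsMatching E M) :
    IsMaxClique E (cliqueOfMatching E M) :=
  isMaxClique_iff.2 ⟨isClique_cliqueOfMatching M, fun _ => hM.exists_conflict_cliqueOfMatching⟩

end CliqueOfMatching

def matchingOfClique (E : Finset (ℕ × ℕ)) (C : Set Route) : Set WEdge :=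
  {w | IsWEdge E w ∧ match w with
    | Sum.inl (i, j) => IsMatchedEdge C i j
    | Sum.inr (Sum.inl (i, j)) => IsLeftPivot C i j ∧ ¬ IsMatchedEdge C i j
    | Sum.inr (Sum.inr (j, i)) => IsRightPivot C i j ∧ ¬ IsMatchedEdge C i j}

section MatchingOfClique

variable {w : WEdge} {i j : ℕ}

open Classical in
lemma exists_eq_of_mem_matchingOfClique_of_leftV (hw : w ∈ matchingOfClique E C)
    (h : leftV w = some i) : ∃ j, IsLeftPivot C i j ∧
      w = if IsMatchedEdge C i j then Sum.inl (i, j) else Sum.inr (Sum.inl (i, j)) := by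
  rcases w with ⟨i', j⟩ | ⟨i', j⟩ | ⟨j, i'⟩ <;> simp only [leftV, Option.some.injEq,
    reduceCtorEq] at h
  · subst h
    exact ⟨j, hw.2.1, (if_pos hw.2).symm⟩
  · subst h
    exact ⟨j, hw.2.1, (if_neg hw.2.2).symm⟩

open Classical in
lemma exists_eq_of_mem_matchingOfClique_of_rightV (hw : w ∈ matchingOfClique E C)
    (h : rightV w = some j) : ∃ i, IsRightPivot C i j ∧
      w = if IsMatchedEdge C i j then Sum.inl (i, j) else Sum.inr (Sum.inr (j, i)) := by
  rcases w with ⟨i, j'⟩ | ⟨i, j'⟩ | ⟨j', i⟩ <;> simp only [rightV, Option.some.injEq,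
    reduceCtorEq] at h
  · subst h
    exact ⟨i, hw.2.2.1, (if_pos hw.2).symm⟩
  · subst h
    exact ⟨i, hw.2.1, (if_neg hw.2.2).symm⟩

lemma IsClique.isMatching_matchingOfClique (hC : IsClique E C) :
    IsMatching E (matchingOfClique E C) := by
  refine isMatching_iff.2 ⟨fun w hw => hw.1, fun w hw w' hw' i h h' => ?_,
    fun w hw w' hw' j h h' => ?_⟩
  · obtain ⟨j, hj, rfl⟩ := exists_eq_of_mem_matchingOfClique_of_leftV hw h
    obtain ⟨j', hj', rfl⟩ := exists_eq_of_mem_matchingOfClique_of_leftV hw' h'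
    rw [hC.isLeftPivot_unique hj hj']
  · obtain ⟨i, hi, rfl⟩ := exists_eq_of_mem_matchingOfClique_of_rightV hw h
    obtain ⟨i', hi', rfl⟩ := exists_eq_of_mem_matchingOfClique_of_rightV hw' h'
    rw [hC.isRightPivot_unique hi hi']

lemma IsMaxClique.leftPivot_matchingOfClique (hC : IsMaxClique E C) (hij : (i, j) ∈ E)
    (h : IsLeftPivot C i j) : leftPivot E (matchingOfClique E C) i = j := by
  have hM := hC.1.isMatching_matchingOfClique
  by_cases hcov : ∃ j', CoversLeft (matchingOfClique E C) i j'
  · obtain ⟨j', hj'⟩ := hcov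
    rw [hM.leftPivot_eq hj']
    exact hC.1.isLeftPivot_unique (hj'.elim (fun h => h.2.1) fun h => h.2.1) h
  · push Not at hcov
    refine le_antisymm (leftPivot_le hcov hij) (not_lt.1 fun hlt => ?_)
    by_cases hE : IsMatchedEdge C i j
    · exact hcov j (Or.inl ⟨hij, hE⟩)
    · exact hcov j (Or.inr ⟨⟨hij, _, mem_nbr.2 (hM.leftPivot_mem hij), hlt⟩, h, hE⟩)

lemma IsMaxClique.rightPivot_matchingOfClique (hC : IsMaxClique E C) (hij : (i, j) ∈ E)
    (h : IsRightPivot C i j) : rightPivot E (matchingOfClique E C) j = i := by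
  have hM := hC.1.isMatching_matchingOfClique
  by_cases hcov : ∃ i', CoversRight (matchingOfClique E C) i' j
  · obtain ⟨i', hi'⟩ := hcov
    rw [hM.rightPivot_eq hi']
    exact hC.1.isRightPivot_unique (hi'.elim (fun h => h.2.2.1) fun h => h.2.1) h
  · push Not at hcov
    refine le_antisymm (not_lt.1 fun hlt => ?_) (le_rightPivot hcov hij)
    by_cases hE : IsMatchedEdge C i j
    · exact hcov i (Or.inl ⟨hij, hE⟩)
    · exact hcov i (Or.inr ⟨⟨hij, _, mem_nbr'.2 (hM.rightPivot_mem hij), hlt⟩, h, hE⟩)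

lemma IsMaxClique.cliqueOfMatching_matchingOfClique (hC : IsMaxClique E C) :
    cliqueOfMatching E (matchingOfClique E C) = C := by
  -- the left side is a clique, so by maximality of `C` only `C ⊆ _` needs proof
  refine hC.2 _ (isClique_cliqueOfMatching _) fun r hr => ?_
  obtain ⟨a, ⟨i, j⟩, c⟩ := r
  obtain ⟨ha, hij, hc⟩ := hC.1.1 _ hr
  obtain ⟨j₀, hj₀, hL⟩ := hC.exists_isLeftPivot hij
  obtain ⟨i₀, hi₀, hR⟩ := hC.exists_isRightPivot hij
  have hf := hC.leftPivot_matchingOfClique hj₀ hL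
  have hg := hC.rightPivot_matchingOfClique hi₀ hR
  refine ⟨hij, ?_, ?_, ?_, ?_⟩
  · rcases ha with rfl | rfl
    · exact leftFits_one.2 (hf ▸ hC.1.left_le hL.2.choose_spec hr)
    · exact leftFits_two.2 (hf ▸ hC.1.left_le hr hL.1.choose_spec)
  · rcases hc with rfl | rfl
    · exact rightFits_one.2 (hg ▸ hC.1.right_le hR.2.choose_spec hr)
    · exact rightFits_two.2 (hg ▸ hC.1.right_le hr hR.1.choose_spec)
  · rintro rfl rfl hmem
    exact hC.1.twist_not_mem hmem.2.2.2 hr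
  · rintro rfl rfl hf' hg'
    obtain rfl : j₀ = j := hf.symm.trans hf'
    obtain rfl : i₀ = i := hg.symm.trans hg'
    exact ⟨hij, hL, hR, hr⟩

lemma IsMatching.matchingOfClique_cliqueOfMatching {M : Set WEdge} (hM : IsMatching E M) :
    matchingOfClique E (cliqueOfMatching E M) = M := by
  ext (⟨i, j⟩ | ⟨i, j⟩ | ⟨j, i⟩)
  · exact ⟨fun h => hM.isMatchedEdge_cliqueOfMatching_iff.1 h.2,
      fun h => ⟨hM.1 _ h, hM.isMatchedEdge_cliqueOfMatching_iff.2 h⟩⟩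
  · rw [hM.mem_leftWhisker_iff]
    exact and_congr_right fun hw => and_congr (hM.isLeftPivot_cliqueOfMatching_iff hw.1)
      (not_congr hM.isMatchedEdge_cliqueOfMatching_iff)
  · rw [hM.mem_rightWhisker_iff]
    exact and_congr_right fun hw => and_congr (hM.isRightPivot_cliqueOfMatching_iff hw.1)
      (not_congr hM.isMatchedEdge_cliqueOfMatching_iff)

end MatchingOfClique

end Routes

noncomputable def maxCliqueEquivMatching (E : Finset (ℕ × ℕ)) :
    {C : Set Route // IsMaxClique E C} ≃ {M : Set WEdge // IsMatching E M} where
  toFun C := ⟨matchingOfClique E C, C.2.1.isMatching_matchingOfClique⟩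
  invFun M := ⟨cliqueOfMatching E M, M.2.isMaxClique_cliqueOfMatching⟩
  left_inv C := Subtype.ext C.2.cliqueOfMatching_matchingOfClique
  right_inv M := Subtype.ext M.2.matchingOfClique_cliqueOfMatching

theorem maxcliques_equiv_matchings_general (E : Finset (ℕ × ℕ)) :
    Nonempty
      (({C : Set Route // IsMaxClique E C}) ≃ ({M : Set WEdge // IsMatching E M})) ∧
    Nat.card {C : Set Route // IsMaxClique E C} =
      Nat.card {M : Set WEdge // IsMatching E M} :=
  ⟨⟨maxCliqueEquivMatching E⟩, Nat.card_congr (maxCliqueEquivMatching E)⟩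

/-- There is a bijection between maximal cliques of routes of `G(H)` and
matchings of `W(H)`; in particular their numbers agree. -/
theorem maxcliques_equiv_matchings (n m : ℕ) (hn : 1 ≤ n) (hm : 1 ≤ m) (E : Finset (ℕ × ℕ))
    (hE : ∀ p ∈ E, 1 ≤ p.1 ∧ p.1 ≤ n ∧ 1 ≤ p.2 ∧ p.2 ≤ m)
    (hdegS : ∀ i ∈ Finset.Icc 1 n, 2 ≤ (Nbr E i).card)
    (hdegT : ∀ j ∈ Finset.Icc 1 m, 2 ≤ (Nbr' E j).card) :
    Nonempty
      (({C : Set Route // IsMaxClique E C}) ≃ ({M : Set WEdge // IsMatching E M})) ∧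
    Nat.card {C : Set Route // IsMaxClique E C} =
      Nat.card {M : Set WEdge // IsMatching E M} :=
  maxcliques_equiv_matchings_general E
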